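/- arXiv:1811.08038 — 2 statements merged into one kernel-verified Lean document; each statement's English description precedes it below -/
import Mathlib

section
/- Let r : ℝ → ℝ be locally integrable with r(u) ≥ 0 for all u, and set B(t,T) := exp(∫_t^T r(u) du). Let t_i = u_k < u_{k+1} < ⋯ < u_ℓ = t_{i+1} ≤ T2 be real numbers and let s1 ≥ s2 ≥ 0. Then s1·∑_{j=k}^{ℓ−1} (u_{j+1} − u_j)·B(u_{j+1},T2) − s2·(t_{i+1} − t_i)·B(t_{i+1},T2) ≥ (s1 − s2)·(t_{i+1} − t_i)·B(t_{i+1},T2). -/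
/-!
Since `r ≥ 0`, the accrual factor `B(·, T2)` is antitone, so on every refined period
`(u_j, u_{j+1}] ⊆ (t_i, t_{i+1}]` it is at least `B(t_{i+1}, T2)`. As the lengths
`u_{j+1} - u_j` telescope to `t_{i+1} - t_i`, the refined annuity dominates
`(t_{i+1} - t_i) B(t_{i+1}, T2)`, and multiplying by `s1 ≥ 0` gives the estimate.
-/

open MeasureTheory Finset

lemma antitone_intervalIntegral_left {r : ℝ → ℝ} (hr : LocallyIntegrable r)
    (hr0 : ∀ u, 0 ≤ r u) (T : ℝ) : Antitone fun t => ∫ u in t..T, r u := by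
  intro s t hst
  dsimp only
  have hint : ∀ a b : ℝ, IntervalIntegrable r volume a b := fun a b =>
    (hr.integrableOn_isCompact isCompact_uIcc).intervalIntegrable
  rw [← intervalIntegral.integral_add_adjacent_intervals (hint s t) (hint t T)]
  simpa using intervalIntegral.integral_nonneg hst fun x _ => hr0 x

lemma mul_sub_le_sum_sub_mul {u w : ℕ → ℝ} {c : ℝ} {k ℓ : ℕ} (hkl : k ≤ ℓ)
    (hu : ∀ j ∈ Ico k ℓ, u j ≤ u (j + 1)) (hw : ∀ j ∈ Ico k ℓ, c ≤ w j) :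
    (u ℓ - u k) * c ≤ ∑ j ∈ Ico k ℓ, (u (j + 1) - u j) * w j := by
  rw [← sum_Ico_sub u hkl, sum_mul]
  exact sum_le_sum fun j hj => mul_le_mul_of_nonneg_left (hw j hj) (sub_nonneg.2 (hu j hj))

theorem stmt_3_general
    (r : ℝ → ℝ) (hr : LocallyIntegrable r) (hr0 : ∀ u, 0 ≤ r u)
    (B : ℝ → ℝ → ℝ) (hB : ∀ t T, B t T = Real.exp (∫ u in t..T, r u))
    (T2 : ℝ) (u : ℕ → ℝ) (k ℓ : ℕ) (hkl : k < ℓ)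
    (hu : ∀ j, k ≤ j → j < ℓ → u j < u (j + 1))
    (s1 s2 : ℝ) (hs : s2 ≤ s1) (hs2 : 0 ≤ s2) :
    (s1 - s2) * (u ℓ - u k) * B (u ℓ) T2 ≤
      s1 * ∑ j ∈ Ico k ℓ, (u (j + 1) - u j) * B (u (j + 1)) T2
        - s2 * (u ℓ - u k) * B (u ℓ) T2 := by
  have hB_anti : Antitone fun t => B t T2 := by
    intro s t hst
    simp only [hB, Real.exp_le_exp]
    exact antitone_intervalIntegral_left hr hr0 T2 hst
  have hu_mono : MonotoneOn u (Set.Icc k ℓ) :=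
    monotoneOn_of_le_add_one Set.ordConnected_Icc fun j _ hj hj1 =>
      (hu j hj.1 (Nat.lt_of_succ_le hj1.2)).le
  have hannuity : (u ℓ - u k) * B (u ℓ) T2 ≤
      ∑ j ∈ Ico k ℓ, (u (j + 1) - u j) * B (u (j + 1)) T2 := by
    refine mul_sub_le_sum_sub_mul hkl.le (fun j hj => ?_) (fun j hj => ?_)
    · obtain ⟨hkj, hjℓ⟩ := mem_Ico.1 hj
      exact (hu j hkj hjℓ).le
    · obtain ⟨hkj, hjℓ⟩ := mem_Ico.1 hj
      exact hB_anti (hu_mono ⟨by omega, by omega⟩ ⟨by omega, le_rfl⟩ hjℓ)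
  linarith [mul_le_mul_of_nonneg_left hannuity (hs2.trans hs)]

/-- Refined-payment-dates estimate: if the payment dates `u k < ⋯ < u ℓ` of the
shorter-maturity CDS refine the payment period `(t_i, t_{i+1}] = (u k, u ℓ]` of the
longer-maturity one, the net protection payment for the period, valued at `T2`, is at
least `(s1 − s2)(t_{i+1} − t_i)·B(t_{i+1},T2)`. -/
theorem stmt_3
    (r : ℝ → ℝ) (hr : LocallyIntegrable r) (hr0 : ∀ u, 0 ≤ r u)
    (B : ℝ → ℝ → ℝ) (hB : ∀ t T, B t T = Real.exp (∫ u in t..T, r u))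
    (T2 : ℝ) (u : ℕ → ℝ) (k ℓ : ℕ) (hkl : k < ℓ)
    (hu : ∀ j, k ≤ j → j < ℓ → u j < u (j + 1))
    (huT2 : u ℓ ≤ T2)
    (s1 s2 : ℝ) (hs : s2 ≤ s1) (hs2 : 0 ≤ s2) :
    (s1 - s2) * (u ℓ - u k) * B (u ℓ) T2 ≤
      s1 * ∑ j ∈ Ico k ℓ, (u (j + 1) - u j) * B (u (j + 1)) T2
        - s2 * (u ℓ - u k) * B (u ℓ) T2 :=
  stmt_3_general r hr hr0 B hB T2 u k ℓ hkl hu s1 s2 hs hs2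
end

section
/- Let T : ℕ → ℝ be a strictly increasing sequence of tenor dates T_0 < T_1 < T_2 < ⋯. Let q : ℝ → ℝ be antitone with q(t) > 0 for all t, Q(T) := ∫_0^T q(u) du, and let P : ℝ → ℝ satisfy P(T_i) > 0 for all i ≥ 1 and P(T_i) ≥ P(T_{i+1}) for all i ≥ 1 (nonincreasing bond prices). Let N : ℝ → ℝ be nondecreasing with N(T) ≥ 0 for all T. For n ≥ 1 define A_n := ∑_{i=1}^n (T_i − T_{i−1})·P(T_i), A^d_n := ∑_{i=1}^n (Q(T_i) − Q(T_{i−1}))·P(T_i) and s_n := N(T_n)/A^d_n. Then the sequence n ↦ (T_n − T_0)·s_n is nondecreasing on n ≥ 1. -/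
/-!
Write `ℓ_i = T_i − T_{i−1}` and `b_i = (Q(T_i) − Q(T_{i−1}))·P(T_i)`, so that `T_n − T_0 = ∑ ℓ_i`
and `A^d_n = ∑ b_i`. Since `q` is antitone, the average of `q` over `[T_{i−1}, T_i]` decreases
in `i`, and so does `P(T_i)`; hence the densities `b_i / ℓ_i` decrease. A ratio of partial sums
of a decreasing density decreases, so `(T_n − T_0) / A^d_n` increases, and multiplying by the
nonnegative nondecreasing `N(T_n)` keeps it increasing.
-/

open MeasureTheory Finset

namespace Antitone

variable {q : ℝ → ℝ} {a b c d : ℝ}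

theorem mul_sub_le_intervalIntegral (hq : Antitone q) (hab : a ≤ b) :
    q b * (b - a) ≤ ∫ u in a..b, q u := by
  have h := intervalIntegral.integral_mono_on (μ := volume) hab intervalIntegrable_const hq.intervalIntegrable
    (fun x hx => hq hx.2)
  rwa [intervalIntegral.integral_const, smul_eq_mul, mul_comm] at h

theorem intervalIntegral_le_mul_sub (hq : Antitone q) (hab : a ≤ b) :
    ∫ u in a..b, q u ≤ q a * (b - a) := by
  have h := intervalIntegral.integral_mono_on (μ := volume) hab hq.intervalIntegrable intervalIntegrable_const
    (fun x hx => hq hx.1)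
  rwa [intervalIntegral.integral_const, smul_eq_mul, mul_comm] at h

/-- Cross-multiplied form of: the mean of `q` over `[c, d]`, times `p'`, is at most the mean of
`q` over the earlier interval `[a, b]`, times `p ≥ p'`. -/
theorem intervalIntegral_mul_mul_sub_le (hq : Antitone q) (hq0 : ∀ t, 0 ≤ q t)
    (hab : a ≤ b) (hbc : b ≤ c) (hcd : c ≤ d) {p p' : ℝ} (hp' : 0 ≤ p') (hpp' : p' ≤ p) :
    (∫ u in c..d, q u) * p' * (b - a) ≤ (∫ u in a..b, q u) * p * (d - c) := by
  have hlate : (∫ u in c..d, q u) * (b - a) ≤ q b * (d - c) * (b - a) :=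
    mul_le_mul_of_nonneg_right ((hq.intervalIntegral_le_mul_sub hcd).trans
      (mul_le_mul_of_nonneg_right (hq hbc) (by linarith))) (by linarith)
  have hearly : q b * (b - a) * (d - c) ≤ (∫ u in a..b, q u) * (d - c) :=
    mul_le_mul_of_nonneg_right (hq.mul_sub_le_intervalIntegral hab) (by linarith)
  have hint : 0 ≤ (∫ u in a..b, q u) * (d - c) :=
    mul_nonneg (intervalIntegral.integral_nonneg hab fun t _ => hq0 t) (by linarith)
  calc (∫ u in c..d, q u) * p' * (b - a) = (∫ u in c..d, q u) * (b - a) * p' := by ring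
    _ ≤ (∫ u in a..b, q u) * (d - c) * p' := mul_le_mul_of_nonneg_right (by linarith) hp'
    _ ≤ (∫ u in a..b, q u) * (d - c) * p := mul_le_mul_of_nonneg_left hpp' hint
    _ = (∫ u in a..b, q u) * p * (d - c) := by ring

end Antitone

theorem Finset.sum_Icc_one_sub_pred {M : Type*} [AddCommGroup M] (f : ℕ → M) (n : ℕ) :
    ∑ i ∈ Icc 1 n, (f i - f (i - 1)) = f n - f 0 := by
  induction n with
  | zero => simp
  | succ n ih => rw [sum_Icc_succ_top (by omega), ih, Nat.add_sub_cancel]; abel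

/-- Mediant inequality: appending a term whose ratio `b (n+1) / ℓ (n+1)` is at most every
earlier ratio does not increase the ratio of partial sums. -/
theorem Finset.sum_Icc_mul_sum_Icc_succ_le {b ℓ : ℕ → ℝ} {n : ℕ}
    (h : ∀ i ∈ Icc 1 n, b (n + 1) * ℓ i ≤ b i * ℓ (n + 1)) :
    (∑ i ∈ Icc 1 n, ℓ i) * ∑ i ∈ Icc 1 (n + 1), b i ≤
      (∑ i ∈ Icc 1 (n + 1), ℓ i) * ∑ i ∈ Icc 1 n, b i := by
  have hsum : b (n + 1) * ∑ i ∈ Icc 1 n, ℓ i ≤ ℓ (n + 1) * ∑ i ∈ Icc 1 n, b i := by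
    simp only [mul_sum]
    exact sum_le_sum fun i hi => by linarith [h i hi]
  rw [sum_Icc_succ_top (by omega), sum_Icc_succ_top (by omega)]
  linarith

theorem stmt_13_general
    (T : ℕ → ℝ) (hT : StrictMono T)
    (q : ℝ → ℝ) (hq : Antitone q) (hq0 : ∀ t, 0 < q t)
    (Q : ℝ → ℝ) (hQ : ∀ x, Q x = ∫ u in (0:ℝ)..x, q u)
    (P : ℝ → ℝ) (hP0 : ∀ i, 1 ≤ i → 0 < P (T i))
    (hPmono : ∀ i, 1 ≤ i → P (T (i + 1)) ≤ P (T i))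
    (N : ℝ → ℝ) (hN : Monotone N) (hN0 : ∀ x, 0 ≤ N x)
    (Ad s : ℕ → ℝ)
    (hAd : ∀ n, Ad n = ∑ i ∈ Icc 1 n, (Q (T i) - Q (T (i - 1))) * P (T i))
    (hs : ∀ n, 1 ≤ n → s n = N (T n) / Ad n) :
    ∀ n m : ℕ, 1 ≤ n → n ≤ m → (T n - T 0) * s n ≤ (T m - T 0) * s m := by
  have hQsub : ∀ a b, Q b - Q a = ∫ u in a..b, q u := fun a b => by
    rw [hQ, hQ, intervalIntegral.integral_interval_sub_left hq.intervalIntegrable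
      hq.intervalIntegrable]
  have hTpred : ∀ i, 1 ≤ i → T (i - 1) < T i := fun i hi => hT (by omega)
  have hPanti : AntitoneOn (fun i => P (T i)) (Set.Ici 1) :=
    antitoneOn_nat_Ici_of_succ_le hPmono
  have hAdpos : ∀ n, 1 ≤ n → 0 < Ad n := fun n hn => by
    rw [hAd]
    refine sum_pos (fun i hi => mul_pos ?_ (hP0 i (mem_Icc.1 hi).1)) ⟨1, by simp [hn]⟩
    rw [hQsub]
    exact intervalIntegral.intervalIntegral_pos_of_pos_on hq.intervalIntegrable
      (fun t _ => hq0 t) (hTpred i (mem_Icc.1 hi).1)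
  have hratio : ∀ n, 1 ≤ n → (T n - T 0) / Ad n ≤ (T (n + 1) - T 0) / Ad (n + 1) := by
    intro n hn
    rw [div_le_div_iff₀ (hAdpos n hn) (hAdpos (n + 1) (by omega)), hAd, hAd,
      ← sum_Icc_one_sub_pred T, ← sum_Icc_one_sub_pred T]
    refine sum_Icc_mul_sum_Icc_succ_le fun i hi => ?_
    obtain ⟨hi1, hin⟩ := mem_Icc.1 hi
    simp only [hQsub, Nat.add_sub_cancel]
    exact hq.intervalIntegral_mul_mul_sub_le (fun t => (hq0 t).le) (hTpred i hi1).le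
      (hT.monotone hin) (hT.monotone n.le_succ) (hP0 (n + 1) (by omega)).le
      (hPanti (Set.mem_Ici.2 hi1) (Set.mem_Ici.2 (by omega)) (by omega))
  have hstep : ∀ n ≥ 1, (T n - T 0) * s n ≤ (T (n + 1) - T 0) * s (n + 1) := by
    intro n hn
    rw [hs n hn, hs (n + 1) (by omega), mul_div_left_comm, mul_div_left_comm _ (N _)]
    exact mul_le_mul (hN (hT n.lt_succ_self).le) (hratio n hn)
      (div_nonneg (sub_nonneg.2 (hT.monotone n.zero_le)) (hAdpos n hn).le) (hN0 _)
  exact fun n m hn hnm => monotoneOn_nat_Ici_of_le_succ hstep hn (le_trans hn hnm) hnm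

/-- Discretely-paid CDS with nonincreasing bond prices: the maturity-weighted fair spread
`(T_n − T_0)·s_n` is nondecreasing in `n ≥ 1`, where `s_n = N(T_n)/A^d_n` is the fair
spread with defaultable annuity `A^d_n = ∑_{i=1}^n (Q(T_i) − Q(T_{i−1}))P(T_i)`,
`Q(T) = ∫_0^T q`. -/
theorem stmt_13
    (T : ℕ → ℝ) (hT : StrictMono T)
    (q : ℝ → ℝ) (hq : Antitone q) (hq0 : ∀ t, 0 < q t)
    (Q : ℝ → ℝ) (hQ : ∀ x, Q x = ∫ u in (0:ℝ)..x, q u)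
    (P : ℝ → ℝ) (hP0 : ∀ i, 1 ≤ i → 0 < P (T i))
    (hPmono : ∀ i, 1 ≤ i → P (T (i + 1)) ≤ P (T i))
    (N : ℝ → ℝ) (hN : Monotone N) (hN0 : ∀ x, 0 ≤ N x)
    (A Ad s : ℕ → ℝ)
    (hA : ∀ n, A n = ∑ i ∈ Icc 1 n, (T i - T (i - 1)) * P (T i))
    (hAd : ∀ n, Ad n = ∑ i ∈ Icc 1 n, (Q (T i) - Q (T (i - 1))) * P (T i))
    (hs : ∀ n, 1 ≤ n → s n = N (T n) / Ad n) :
    ∀ n m : ℕ, 1 ≤ n → n ≤ m → (T n - T 0) * s n ≤ (T m - T 0) * s m :=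
  stmt_13_general T hT q hq hq0 Q hQ P hP0 hPmono N hN hN0 Ad s hAd hs
end
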